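/- arXiv:2512.19440 — 3 statements merged into one kernel-verified Lean document; each statement's English description precedes it below -/
import Mathlib

section
/- Let N ≥ 1, y ∈ {−1,1}^N, K a symmetric positive semidefinite N×N matrix, C > 0, λ ∈ ℝ. Define f(α) = (1/2)Σᵢⱼ yᵢyⱼαᵢαⱼKᵢⱼ + CΣᵢG(αᵢ/C) − λΣᵢαᵢ where G(δ) = δ log δ + (1−δ) log(1−δ) extended by G(0)=G(1)=0. Then for any minimizer α* of f over the feasible set {α ∈ [0,C]^N : Σᵢ αᵢyᵢ = 0} containing a point in the open box (0,C)^N with Σᵢαᵢyᵢ=0, every component of α* satisfies 0 < αᵢ* < C. -/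
/-!
Move from the minimizer `α*` towards a strictly feasible point `β` along `γ t = α* + t (β - α*)`,
which stays feasible by convexity. The quadratic and linear parts of the objective grow at most
linearly in `t`, and by concavity so does the loss of entropy `binEntropy (α i / C)` in each
coordinate. At a coordinate with `α* i ∈ {0, C}`, however, the entropy gains at least
`-c t log (c t)`, whose slope at `t = 0⁺` is `+∞`; hence `f (γ t) < f α*` for small `t > 0`.
-/

open Real Set Filter Topology
open Finset (univ mem_univ mul_sum sum_add_distrib sum_congr sum_le_sum add_sum_erase)

lemma mul_log_add_one_sub_mul_log_one_sub (p : ℝ) :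
    p * log p + (1 - p) * log (1 - p) = -binEntropy p := by
  simp only [binEntropy, log_inv]
  ring

lemma negMulLog_le_binEntropy {p : ℝ} (h₀ : 0 ≤ p) (h₁ : p ≤ 1) :
    negMulLog p ≤ binEntropy p := by
  rw [binEntropy_eq_negMulLog_add_negMulLog_one_sub]
  linarith [negMulLog_nonneg (sub_nonneg.2 h₁) (sub_le_self 1 h₀)]

lemma le_binEntropy_segment {x z t : ℝ} (hx : x ∈ Icc 0 1) (hz : z ∈ Icc 0 1)
    (ht : t ∈ Icc 0 1) :
    binEntropy x + t * (binEntropy z - binEntropy x) ≤ binEntropy (x + t * (z - x)) := by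
  have h := strictConcave_binEntropy.concaveOn.2 hx hz (sub_nonneg.2 ht.2) ht.1
    (sub_add_cancel 1 t)
  simp only [smul_eq_mul] at h
  rw [show x + t * (z - x) = (1 - t) * x + t * z by ring]
  linarith

lemma exists_negMulLog_mul_le_binEntropy_segment {x z : ℝ} (hx : x = 0 ∨ x = 1)
    (hz : z ∈ Ioo 0 1) :
    ∃ c ∈ Ioo (0 : ℝ) 1, ∀ t ∈ Icc (0 : ℝ) 1,
      negMulLog (c * t) ≤ binEntropy (x + t * (z - x)) := by
  have hdiag : ∀ c ∈ Ioo (0 : ℝ) 1, ∀ t ∈ Icc (0 : ℝ) 1, negMulLog (c * t) ≤ binEntropy (c * t) :=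
    fun c hc t ht => negMulLog_le_binEntropy (mul_nonneg hc.1.le ht.1)
      (mul_le_one₀ hc.2.le ht.1 ht.2)
  rcases hx with rfl | rfl
  · refine ⟨z, hz, fun t ht => ?_⟩
    convert hdiag z hz t ht using 2
    ring
  · refine ⟨1 - z, ⟨sub_pos.2 hz.2, sub_lt_self 1 hz.1⟩, fun t ht => ?_⟩
    rw [← binEntropy_one_sub]
    convert hdiag (1 - z) ⟨sub_pos.2 hz.2, sub_lt_self 1 hz.1⟩ t ht using 2
    ring

lemma exists_le_sum_binEntropy_segment {ι : Type*} [Fintype ι] {x z : ι → ℝ}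
    (hx : ∀ i, x i ∈ Icc 0 1) (hz : ∀ i, z i ∈ Ioo 0 1) {i₀ : ι} (hi₀ : x i₀ = 0 ∨ x i₀ = 1) :
    ∃ e, ∃ c > 0, ∀ t ∈ Ioc (0 : ℝ) 1,
      ∑ i, binEntropy (x i) + t * (e - c * log t) ≤ ∑ i, binEntropy (x i + t * (z i - x i)) := by
  classical
  obtain ⟨c, hc, hc_bound⟩ := exists_negMulLog_mul_le_binEntropy_segment hi₀ (hz i₀)
  -- `negMulLog (c * t) = t * negMulLog c - c * t * log t` supplies the `log t` term.
  refine ⟨∑ i ∈ univ.erase i₀, (binEntropy (z i) - binEntropy (x i)) + negMulLog c, c, hc.1,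
    fun t ht => ?_⟩
  have hbulk : ∑ i ∈ univ.erase i₀, (binEntropy (x i) + t * (binEntropy (z i) - binEntropy (x i)))
      ≤ ∑ i ∈ univ.erase i₀, binEntropy (x i + t * (z i - x i)) :=
    sum_le_sum fun i _ => le_binEntropy_segment (hx i) (Ioo_subset_Icc_self (hz i))
      (Ioc_subset_Icc_self ht)
  have hsingular := hc_bound t (Ioc_subset_Icc_self ht)
  have hx₀ : binEntropy (x i₀) = 0 := binEntropy_eq_zero.2 hi₀
  rw [negMulLog_mul, show negMulLog t = -t * log t from rfl] at hsingular
  rw [sum_add_distrib, ← mul_sum] at hbulk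
  rw [← add_sum_erase _ _ (mem_univ i₀), ← add_sum_erase _ _ (mem_univ i₀)]
  linarith

lemma exists_quadraticForm_segment_le {ι : Type*} [Fintype ι] (y : ι → ℝ) (K : Matrix ι ι ℝ)
    (u d : ι → ℝ) :
    ∃ m, ∀ t ∈ Icc (0 : ℝ) 1,
      ∑ i, ∑ j, y i * y j * (u i + t * d i) * (u j + t * d j) * K i j
        ≤ ∑ i, ∑ j, y i * y j * u i * u j * K i j + t * m := by
  set B := ∑ i, ∑ j, y i * y j * (u i * d j + d i * u j) * K i j
  set D := ∑ i, ∑ j, y i * y j * d i * d j * K i j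
  refine ⟨B + |D|, fun t ht => ?_⟩
  have hexpand : ∑ i, ∑ j, y i * y j * (u i + t * d i) * (u j + t * d j) * K i j
      = ∑ i, ∑ j, y i * y j * u i * u j * K i j + t * B + t ^ 2 * D := by
    simp only [B, D, mul_sum, ← sum_add_distrib]
    exact sum_congr rfl fun i _ => sum_congr rfl fun j _ => by ring
  have hquad : t ^ 2 * D ≤ t * |D| := by
    nlinarith [le_abs_self D, abs_nonneg D, mul_nonneg ht.1 (sub_nonneg.2 ht.2)]
  linarith

lemma exists_mem_Ioc_add_mul_log_neg (M : ℝ) {a : ℝ} (ha : 0 < a) :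
    ∃ t ∈ Ioc (0 : ℝ) 1, M + a * log t < 0 := by
  obtain ⟨t, ht, hlog⟩ := (Filter.Eventually.and (Ioc_mem_nhdsGT one_pos)
    (tendsto_log_nhdsGT_zero.eventually_lt_atBot (-M / a))).exists
  refine ⟨t, ht, ?_⟩
  linarith [(lt_div_iff₀ ha).1 hlog]

lemma convex_box_inter_hyperplane {ι : Type*} [Fintype ι] (y : ι → ℝ) (C : ℝ) :
    Convex ℝ {α : ι → ℝ | (∀ i, α i ∈ Icc 0 C) ∧ ∑ i, α i * y i = 0} := by
  intro α hα β hβ a b ha hb hab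
  refine ⟨fun i => convex_Icc 0 C (hα.1 i) (hβ.1 i) ha hb hab, ?_⟩
  simp only [Pi.add_apply, Pi.smul_apply, smul_eq_mul, add_mul, sum_add_distrib, mul_assoc,
    ← mul_sum, hα.2, hβ.2]
  ring

theorem minimizer_interior_general
    (N : ℕ) (y : Fin N → ℝ)
    (K : Matrix (Fin N) (Fin N) ℝ)
    (C : ℝ) (hC : 0 < C) (lam : ℝ)
    (f : (Fin N → ℝ) → ℝ)
    (hf : ∀ α : Fin N → ℝ,
      f α = (1 / 2) * ∑ i, ∑ j, y i * y j * α i * α j * K i j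
          + C * ∑ i, ((α i / C) * Real.log (α i / C)
              + (1 - α i / C) * Real.log (1 - α i / C))
          - lam * ∑ i, α i)
    (S : Set (Fin N → ℝ))
    (hS : S = {α : Fin N → ℝ | (∀ i, α i ∈ Set.Icc 0 C) ∧ ∑ i, α i * y i = 0})
    (hinterior : ∃ β ∈ S, ∀ i, β i ∈ Set.Ioo 0 C)
    (αstar : Fin N → ℝ) (hαS : αstar ∈ S)
    (hmin : ∀ β ∈ S, f αstar ≤ f β) :
    ∀ i, 0 < αstar i ∧ αstar i < C := by
  intro i₀
  by_contra h_boundary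
  obtain ⟨β, hβS, hβ⟩ := hinterior
  subst hS
  have hx₀ : αstar i₀ / C = 0 ∨ αstar i₀ / C = 1 := by
    have h : αstar i₀ ∈ ({0, C} : Set ℝ) := Icc_sdiff_Ioo_same hC.le ▸ ⟨hαS.1 i₀, h_boundary⟩
    rcases h with h | h
    · simp [h]
    · simp [mem_singleton_iff.1 h, hC.ne']
  obtain ⟨e, c, hc, hH⟩ := exists_le_sum_binEntropy_segment
    (fun i => ⟨div_nonneg (hαS.1 i).1 hC.le, div_le_one_of_le₀ (hαS.1 i).2 hC.le⟩)
    (fun i => ⟨div_pos (hβ i).1 hC, (div_lt_one hC).2 (hβ i).2⟩) hx₀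
  obtain ⟨m, hQ⟩ := exists_quadraticForm_segment_le y K αstar (β - αstar)
  obtain ⟨t, ht, hslope⟩ := exists_mem_Ioc_add_mul_log_neg
    (m / 2 - lam * ∑ i, (β i - αstar i) - C * e) (mul_pos hC hc)
  have hγS := (convex_box_inter_hyperplane y C).add_smul_sub_mem hαS hβS (Ioc_subset_Icc_self ht)
  refine (hmin _ hγS).not_gt ?_
  have hscale : ∀ i, (αstar i + t * (β i - αstar i)) / C
      = αstar i / C + t * (β i / C - αstar i / C) := fun i => by ring
  have hsum : ∑ i, (αstar i + t * (β i - αstar i)) = ∑ i, αstar i + t * ∑ i, (β i - αstar i) := by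
    rw [sum_add_distrib, mul_sum]
  simp only [hf, Pi.add_apply, Pi.smul_apply, Pi.sub_apply, smul_eq_mul,
    mul_log_add_one_sub_mul_log_one_sub, hscale, Finset.sum_neg_distrib, hsum]
  have hQt := hQ t (Ioc_subset_Icc_self ht)
  simp only [Pi.sub_apply] at hQt
  linarith [mul_le_mul_of_nonneg_left (hH t ht) hC.le, mul_neg_of_pos_of_neg ht.1 hslope]

theorem minimizer_interior
    (N : ℕ) (hN : 1 ≤ N) (y : Fin N → ℝ) (hy : ∀ i, y i = 1 ∨ y i = -1)
    (K : Matrix (Fin N) (Fin N) ℝ) (hKsymm : K.IsSymm)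
    (hKpsd : ∀ v : Fin N → ℝ, 0 ≤ ∑ i, ∑ j, v i * K i j * v j)
    (C : ℝ) (hC : 0 < C) (lam : ℝ)
    (f : (Fin N → ℝ) → ℝ)
    (hf : ∀ α : Fin N → ℝ,
      f α = (1 / 2) * ∑ i, ∑ j, y i * y j * α i * α j * K i j
          + C * ∑ i, ((α i / C) * Real.log (α i / C)
              + (1 - α i / C) * Real.log (1 - α i / C))
          - lam * ∑ i, α i)
    (S : Set (Fin N → ℝ))
    (hS : S = {α : Fin N → ℝ | (∀ i, α i ∈ Set.Icc 0 C) ∧ ∑ i, α i * y i = 0})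
    (hinterior : ∃ β ∈ S, ∀ i, β i ∈ Set.Ioo 0 C)
    (αstar : Fin N → ℝ) (hαS : αstar ∈ S)
    (hmin : ∀ β ∈ S, f αstar ≤ f β) :
    ∀ i, 0 < αstar i ∧ αstar i < C :=
  minimizer_interior_general N y K C hC lam f hf S hS hinterior αstar hαS hmin
end

section
/- Let α ∈ (0,C)^N with Σᵢ yᵢαᵢ = 0 be a minimizer of f(α) = (1/2)Σᵢⱼ yᵢyⱼαᵢαⱼKᵢⱼ + CΣᵢG(αᵢ/C) − λΣᵢαᵢ subject to Σᵢ yᵢαᵢ = 0, where G(δ) = δ log δ + (1−δ) log(1−δ). Then there exists ψ ∈ ℝ such that for every i, λ − yᵢ·Σⱼ αⱼyⱼKᵢⱼ + yᵢψ = log((αᵢ/C)/(1 − αᵢ/C)). -/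
/-!
Since the box is open and the constraint `y ⬝ᵥ β = 0` is linear, `α` minimises `f` locally along
every line `α + t • v` with `y ⬝ᵥ v = 0`, so the derivative of `f` at `α` vanishes on the
hyperplane `y⊥`. The gradient of `f` at `α` has coordinates
`yᵢ (K (y ∘ α))ᵢ + log (uᵢ / (1 - uᵢ)) - λ` with `uᵢ = αᵢ / C` (using the symmetry of `K` for the
quadratic part, and `G' = -binEntropy' = log (u / (1 - u))` for the entropy part), and a linear
functional vanishing on `y⊥` is a multiple `ψ • y` of `y`.
-/

open Real Matrix Finset Filter Topology

section
variable {ι : Type*} [Fintype ι]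

lemma exists_eq_smul_of_forall_dotProduct_eq_zero {𝕜 : Type*} [Field 𝕜] {y g : ι → 𝕜}
    (h : ∀ v, y ⬝ᵥ v = 0 → v ⬝ᵥ g = 0) : ∃ ψ : 𝕜, g = ψ • y := by
  classical
  by_cases hy : y = 0
  · refine ⟨0, funext fun i => ?_⟩
    simpa [hy] using h (Pi.single i 1) (by simp [hy])
  obtain ⟨i₀, hi₀⟩ := Function.ne_iff.1 hy
  refine ⟨g i₀ / y i₀, funext fun i => ?_⟩
  have hperp := h (Pi.single i (y i₀) - Pi.single i₀ (y i)) (by simp [dotProduct_sub]; ring)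
  simp only [sub_dotProduct, single_dotProduct] at hperp
  simp only [Pi.smul_apply, smul_eq_mul, Pi.zero_apply] at hi₀ ⊢
  field_simp
  linear_combination hperp

lemma Matrix.IsSymm.hasDerivAt_sum_sum_line {A : Matrix ι ι ℝ} (hA : A.IsSymm) (a v : ι → ℝ) :
    HasDerivAt (fun t : ℝ => ∑ i, ∑ j, (a i + t * v i) * (a j + t * v j) * A i j)
      (2 * ∑ i, v i * ∑ j, a j * A i j) 0 := by
  have hline : ∀ k, HasDerivAt (fun t : ℝ => a k + t * v k) (v k) 0 := fun k =>
    (hasDerivAt_mul_const (v k)).const_add (a k)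
  have hsum := HasDerivAt.fun_sum (u := univ) fun i _ => HasDerivAt.fun_sum (u := univ)
    fun j _ => ((hline i).fun_mul (hline j)).mul_const (A i j)
  refine hsum.congr_deriv ?_
  have hswap : ∑ i, ∑ j, a i * v j * A i j = ∑ i, ∑ j, v i * a j * A i j := by
    rw [sum_comm]
    exact sum_congr rfl fun i _ => sum_congr rfl fun j _ => by rw [hA.apply]; ring
  simp only [zero_mul, add_zero, add_mul, sum_add_distrib]
  rw [hswap, ← two_mul]
  simp only [mul_sum, mul_assoc]

lemma IsLocalMinOn.isLocalMin_line {E : Type*} [AddCommGroup E] [Module ℝ E] [TopologicalSpace E]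
    [ContinuousAdd E] [ContinuousSMul ℝ E] {F : E → ℝ} {S : Set E} {a v : E}
    (h : IsLocalMinOn F S a) (hv : ∀ t : ℝ, a + t • v ∈ S) :
    IsLocalMin (fun t : ℝ => F (a + t • v)) 0 :=
  isLocalMinOn_univ_iff.1 <| IsLocalMinOn.comp_continuousOn (g := fun t : ℝ => a + t • v)
    (by simpa using h) (fun t _ => hv t) (by fun_prop) (Set.mem_univ 0)

lemma hasDerivAt_mul_log_add_one_sub_mul_log_one_sub {δ : ℝ} (h₀ : δ ≠ 0) (h₁ : δ ≠ 1) :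
    HasDerivAt (fun x => x * log x + (1 - x) * log (1 - x)) (log (δ / (1 - δ))) δ := by
  have hG : (fun x => x * log x + (1 - x) * log (1 - x)) = -binEntropy := by
    funext x; simp only [Pi.neg_apply, binEntropy, log_inv]; ring
  rw [hG, log_div h₀ (sub_ne_zero.2 h₁.symm)]
  exact (hasDerivAt_binEntropy h₀ h₁).neg.congr_deriv (by ring)

noncomputable def dualObjective (y : ι → ℝ) (K : Matrix ι ι ℝ) (C lam : ℝ) (β : ι → ℝ) : ℝ :=
  (1 / 2) * ∑ i, ∑ j, y i * y j * β i * β j * K i j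
    + C * ∑ i, ((β i / C) * log (β i / C) + (1 - β i / C) * log (1 - β i / C))
    - lam * ∑ i, β i

lemma hasDerivAt_dualObjective_line {y : ι → ℝ} {K : Matrix ι ι ℝ} (hK : K.IsSymm) {C : ℝ}
    (lam : ℝ) {α : ι → ℝ} (hα : ∀ i, α i ∈ Set.Ioo 0 C) (v : ι → ℝ) :
    HasDerivAt (fun t : ℝ => dualObjective y K C lam (α + t • v))
      (v ⬝ᵥ fun i => y i * ∑ j, α j * y j * K i j + log ((α i / C) / (1 - α i / C)) - lam) 0 := by
  have hline : ∀ i, HasDerivAt (fun t : ℝ => α i + t * v i) (v i) 0 := fun i =>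
    (hasDerivAt_mul_const (v i)).const_add (α i)
  have hent : ∀ i, HasDerivAt
      (fun t : ℝ => (α i + t * v i) / C * log ((α i + t * v i) / C)
        + (1 - (α i + t * v i) / C) * log (1 - (α i + t * v i) / C))
      (log ((α i / C) / (1 - α i / C)) * (v i / C)) 0 := by
    intro i
    obtain ⟨h₀, h₁⟩ := hα i
    have hC : C ≠ 0 := (h₀.trans h₁).ne'
    have hG := hasDerivAt_mul_log_add_one_sub_mul_log_one_sub (div_ne_zero h₀.ne' hC)
      ((div_lt_one (h₀.trans h₁)).2 h₁).ne
    exact hG.comp_of_eq 0 ((hline i).div_const C) (by simp)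
  have hsum := ((hK.hasDerivAt_sum_sum_line (fun i => y i * α i) (fun i => y i * v i)).const_mul
    (1 / 2)).add ((HasDerivAt.fun_sum (u := univ) fun i _ => hent i).const_mul C) |>.sub
    ((HasDerivAt.fun_sum (u := univ) fun i _ => hline i).const_mul lam)
  refine hsum.congr_deriv ?_ |>.congr_of_eventuallyEq (Eventually.of_forall fun t => ?_)
  · simp only [dotProduct, mul_sum, ← sum_add_distrib, ← sum_sub_distrib]
    refine sum_congr rfl fun i _ => ?_
    have hC : C ≠ 0 := ((hα i).1.trans (hα i).2).ne'
    field_simp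
    rw [mul_sub, mul_add, mul_sum]
    congr 2
    exact sum_congr rfl fun j _ => by ring
  · simp only [dualObjective, Pi.add_apply, Pi.sub_apply, Pi.smul_apply, smul_eq_mul]
    congr 3
    exact sum_congr rfl fun i _ => sum_congr rfl fun j _ => by ring

end

theorem kkt_stationarity_general
    (N : ℕ) (y : Fin N → ℝ)
    (K : Matrix (Fin N) (Fin N) ℝ) (hKsymm : K.IsSymm)
    (C : ℝ) (lam : ℝ)
    (f : (Fin N → ℝ) → ℝ)
    (hf : ∀ α : Fin N → ℝ,
      f α = (1 / 2) * ∑ i, ∑ j, y i * y j * α i * α j * K i j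
          + C * ∑ i, ((α i / C) * Real.log (α i / C)
              + (1 - α i / C) * Real.log (1 - α i / C))
          - lam * ∑ i, α i)
    (α : Fin N → ℝ) (hbox : ∀ i, α i ∈ Set.Ioo 0 C)
    (hfeas : ∑ i, y i * α i = 0)
    (hmin : ∀ β : Fin N → ℝ, (∀ i, β i ∈ Set.Ioo 0 C) → ∑ i, y i * β i = 0 →
      f α ≤ f β) :
    ∃ ψ : ℝ, ∀ i,
      lam - y i * (∑ j, α j * y j * K i j) + y i * ψ
        = Real.log ((α i / C) / (1 - α i / C)) := by
  have hf' : f = dualObjective y K C lam := funext hf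
  have hbox_nhds : ∀ᶠ β in 𝓝 α, ∀ i, β i ∈ Set.Ioo 0 C := eventually_all.2 fun i =>
    (continuous_apply i).continuousAt.eventually_mem (isOpen_Ioo.mem_nhds (hbox i))
  have hlocal : IsLocalMinOn f {β | y ⬝ᵥ β = 0} α := by
    filter_upwards [self_mem_nhdsWithin, mem_nhdsWithin_of_mem_nhds hbox_nhds] with β hβ hβbox
    exact hmin β hβbox hβ
  have horth : ∀ v, y ⬝ᵥ v = 0 →
      v ⬝ᵥ (fun i => y i * ∑ j, α j * y j * K i j + log ((α i / C) / (1 - α i / C)) - lam) = 0 :=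
    fun v hv =>
      have hline : ∀ t : ℝ, α + t • v ∈ {β | y ⬝ᵥ β = 0} := fun t => by
        change y ⬝ᵥ (α + t • v) = 0
        rw [dotProduct_add, dotProduct_smul, hv, smul_zero, add_zero]; exact hfeas
      (hlocal.isLocalMin_line hline).hasDerivAt_eq_zero
        (hf' ▸ hasDerivAt_dualObjective_line hKsymm lam hbox v)
  obtain ⟨ψ, hψ⟩ := exists_eq_smul_of_forall_dotProduct_eq_zero horth
  refine ⟨ψ, fun i => ?_⟩
  have hψi := congrFun hψ i
  simp only [Pi.smul_apply, smul_eq_mul] at hψi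
  linear_combination -hψi

theorem kkt_stationarity
    (N : ℕ) (hN : 1 ≤ N) (y : Fin N → ℝ) (hy : ∀ i, y i = 1 ∨ y i = -1)
    (K : Matrix (Fin N) (Fin N) ℝ) (hKsymm : K.IsSymm)
    (hKpsd : ∀ v : Fin N → ℝ, 0 ≤ ∑ i, ∑ j, v i * K i j * v j)
    (C : ℝ) (hC : 0 < C) (lam : ℝ)
    (f : (Fin N → ℝ) → ℝ)
    (hf : ∀ α : Fin N → ℝ,
      f α = (1 / 2) * ∑ i, ∑ j, y i * y j * α i * α j * K i j
          + C * ∑ i, ((α i / C) * Real.log (α i / C)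
              + (1 - α i / C) * Real.log (1 - α i / C))
          - lam * ∑ i, α i)
    (α : Fin N → ℝ) (hbox : ∀ i, α i ∈ Set.Ioo 0 C)
    (hfeas : ∑ i, y i * α i = 0)
    (hmin : ∀ β : Fin N → ℝ, (∀ i, β i ∈ Set.Ioo 0 C) → ∑ i, y i * β i = 0 →
      f α ≤ f β) :
    ∃ ψ : ℝ, ∀ i,
      lam - y i * (∑ j, α j * y j * K i j) + y i * ψ
        = Real.log ((α i / C) / (1 - α i / C)) :=
  kkt_stationarity_general N y K hKsymm C lam f hf α hbox hfeas hmin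
end

section
/- Let N ≥ 1, y ∈ {−1,1}^N, and let f : ℝ^N → ℝ be differentiable. Let α ∈ [0,C]^N with Σᵢ yᵢαᵢ = 0. Define I_up(α) = {i : (αᵢ < C and yᵢ = 1) or (αᵢ > 0 and yᵢ = −1)} and I_low(α) = {i : (αᵢ < C and yᵢ = −1) or (αᵢ > 0 and yᵢ = 1)}. Then the following are equivalent: (1) there exists b ∈ ℝ such that for all i, ∇f(α)ᵢ + b·yᵢ ≥ 0 whenever αᵢ < C and ∇f(α)ᵢ + b·yᵢ ≤ 0 whenever αᵢ > 0; (2) max over i ∈ I_up(α) of (−yᵢ∇f(α)ᵢ) ≤ min over i ∈ I_low(α) of (−yᵢ∇f(α)ᵢ) (with the convention that the inequality holds if either set is empty). -/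
theorem smo_optimality_characterization
    (N : ℕ) (hN : 1 ≤ N) (C : ℝ) (hC : 0 < C)
    (y : Fin N → ℝ) (hy : ∀ i, y i = 1 ∨ y i = -1)
    (f : (Fin N → ℝ) → ℝ) (hf : Differentiable ℝ f)
    (α : Fin N → ℝ) (hbox : ∀ i, α i ∈ Set.Icc 0 C)
    (hfeas : ∑ i, y i * α i = 0) :
    ((∃ b : ℝ, ∀ i,
        (α i < C → 0 ≤ fderiv ℝ f α (Pi.single i 1) + b * y i) ∧
        (0 < α i → fderiv ℝ f α (Pi.single i 1) + b * y i ≤ 0))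
      ↔
      (∀ i, ((α i < C ∧ y i = 1) ∨ (0 < α i ∧ y i = -1)) →
        ∀ j, ((α j < C ∧ y j = -1) ∨ (0 < α j ∧ y j = 1)) →
          -(y i) * fderiv ℝ f α (Pi.single i 1)
            ≤ -(y j) * fderiv ℝ f α (Pi.single j 1))) := by
  classical
  set g : Fin N → ℝ := fun i => fderiv ℝ f α (Pi.single i 1) with hg
  constructor
  · rintro ⟨b, hb⟩ i hi j hj
    have hib : -(y i) * g i ≤ b := by
      rcases hi with ⟨h1, h2⟩ | ⟨h1, h2⟩
      · have := (hb i).1 h1; rw [h2] at this ⊢; linarith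
      · have := (hb i).2 h1; rw [h2] at this ⊢; linarith
    have hjb : b ≤ -(y j) * g j := by
      rcases hj with ⟨h1, h2⟩ | ⟨h1, h2⟩
      · have := (hb j).1 h1; rw [h2] at this ⊢; linarith
      · have := (hb j).2 h1; rw [h2] at this ⊢; linarith
    linarith
  · intro h
    set Su : Finset (Fin N) :=
      Finset.univ.filter (fun i => (α i < C ∧ y i = 1) ∨ (0 < α i ∧ y i = -1)) with hSu
    set Sl : Finset (Fin N) :=
      Finset.univ.filter (fun i => (α i < C ∧ y i = -1) ∨ (0 < α i ∧ y i = 1)) with hSl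
    have hmemSu : ∀ i, ((α i < C ∧ y i = 1) ∨ (0 < α i ∧ y i = -1)) → i ∈ Su := by
      intro i hi; simp [hSu, hi]
    have hmemSl : ∀ i, ((α i < C ∧ y i = -1) ∨ (0 < α i ∧ y i = 1)) → i ∈ Sl := by
      intro i hi; simp [hSl, hi]
    have hSuP : ∀ i ∈ Su, (α i < C ∧ y i = 1) ∨ (0 < α i ∧ y i = -1) := by
      intro i hi; simpa [hSu] using hi
    have hSlP : ∀ i ∈ Sl, (α i < C ∧ y i = -1) ∨ (0 < α i ∧ y i = 1) := by
      intro i hi; simpa [hSl] using hi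
    have hcov : ∀ i, i ∈ Su ∨ i ∈ Sl := by
      intro i
      have hbi := hbox i
      have hlt : α i < C ∨ 0 < α i := by
        rcases lt_or_eq_of_le hbi.2 with h' | h'
        · exact Or.inl h'
        · exact Or.inr (h' ▸ hC)
      rcases hy i with hy1 | hy1 <;> rcases hlt with h' | h'
      · exact Or.inl (hmemSu i (Or.inl ⟨h', hy1⟩))
      · exact Or.inr (hmemSl i (Or.inr ⟨h', hy1⟩))
      · exact Or.inr (hmemSl i (Or.inl ⟨h', hy1⟩))
      · exact Or.inl (hmemSu i (Or.inr ⟨h', hy1⟩))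
    by_cases hne : Su.Nonempty
    · refine ⟨Su.sup' hne (fun i => -(y i) * g i), ?_⟩
      intro i
      have hup : ∀ j, ((α j < C ∧ y j = 1) ∨ (0 < α j ∧ y j = -1)) →
          -(y j) * g j ≤ Su.sup' hne (fun k => -(y k) * g k) := by
        intro j hj
        exact Finset.le_sup' (fun k => -(y k) * g k) (hmemSu j hj)
      have hlow : ∀ j, ((α j < C ∧ y j = -1) ∨ (0 < α j ∧ y j = 1)) →
          Su.sup' hne (fun k => -(y k) * g k) ≤ -(y j) * g j := by
        intro j hj
        exact Finset.sup'_le hne _ (fun k hk => h k (hSuP k hk) j hj)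
      constructor
      · intro hiC
        rcases hy i with hy1 | hy1
        · have := hup i (Or.inl ⟨hiC, hy1⟩)
          rw [hy1] at this ⊢; simp only [hg] at this ⊢; linarith
        · have := hlow i (Or.inl ⟨hiC, hy1⟩)
          rw [hy1] at this ⊢; simp only [hg] at this ⊢; linarith
      · intro hi0
        rcases hy i with hy1 | hy1
        · have := hlow i (Or.inr ⟨hi0, hy1⟩)
          rw [hy1] at this ⊢; simp only [hg] at this ⊢; linarith
        · have := hup i (Or.inr ⟨hi0, hy1⟩)
          rw [hy1] at this ⊢; simp only [hg] at this ⊢; linarith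
    · have hne' : Sl.Nonempty := by
        have i0 : Fin N := ⟨0, hN⟩
        rcases hcov i0 with h' | h'
        · exact absurd ⟨i0, h'⟩ hne
        · exact ⟨i0, h'⟩
      refine ⟨Sl.inf' hne' (fun i => -(y i) * g i), ?_⟩
      intro i
      have hlow : ∀ j, ((α j < C ∧ y j = -1) ∨ (0 < α j ∧ y j = 1)) →
          Sl.inf' hne' (fun k => -(y k) * g k) ≤ -(y j) * g j := by
        intro j hj
        exact Finset.inf'_le (fun k => -(y k) * g k) (hmemSl j hj)
      constructor
      · intro hiC
        rcases hy i with hy1 | hy1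
        · exact absurd ⟨i, hmemSu i (Or.inl ⟨hiC, hy1⟩)⟩ hne
        · have := hlow i (Or.inl ⟨hiC, hy1⟩)
          rw [hy1] at this ⊢; simp only [hg] at this ⊢; linarith
      · intro hi0
        rcases hy i with hy1 | hy1
        · have := hlow i (Or.inr ⟨hi0, hy1⟩)
          rw [hy1] at this ⊢; simp only [hg] at this ⊢; linarith
        · exact absurd ⟨i, hmemSu i (Or.inr ⟨hi0, hy1⟩)⟩ hne
end
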